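/- arXiv:2509.24040 — 5 statements merged into one kernel-verified Lean document; each statement's English description precedes it below -/
import Mathlib

section
/- The Demazure operators satisfy the braid relation: for every Laurent polynomial f in x_1,…,x_N and every 1 ≤ i ≤ N−2, π_i(π_{i+1}(π_i(f))) = π_{i+1}(π_i(π_{i+1}(f))). -/
noncomputable section


open MvPolynomial

/-- The field of rational functions in `N` variables over `ℚ`. -/
abbrev KK (N : ℕ) : Type := FractionRing (MvPolynomial (Fin N) ℚ)

/-- The variable `x_i` as a rational function. -/
def XV {N : ℕ} (i : Fin N) : KK N :=
  algebraMap (MvPolynomial (Fin N) ℚ) (KK N) (X i)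

/-- The field automorphism `s` exchanging the variables `x_i` and `x_j`. -/
def swapK {N : ℕ} (i j : Fin N) : KK N →+* KK N :=
  IsFractionRing.lift (g := (algebraMap (MvPolynomial (Fin N) ℚ) (KK N)).comp
      (rename (Equiv.swap i j)).toRingHom)
    (by
      rw [RingHom.coe_comp]
      exact (IsFractionRing.injective _ _).comp
        (rename_injective _ (Equiv.swap i j).injective))

/-- The Demazure (isobaric divided difference) operator
`π(f) = (x_i f - s(x_i f)) / (x_i - x_j)` (for `j = i+1`). -/
def dem {N : ℕ} (i j : Fin N) (f : KK N) : KK N :=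
  (XV i * f - swapK i j (XV i * f)) / (XV i - XV j)

/-- The subalgebra of Laurent polynomials: generated by the variables and
their inverses. -/
def LaurentSub (N : ℕ) : Subalgebra ℚ (KK N) :=
  Algebra.adjoin ℚ (Set.range (XV (N := N)) ∪ Set.range (fun i => (XV (N := N) i)⁻¹))

/-! The Demazure operators are isobaric divided differences `f ↦ (a f - s(a f)) / (a - b)` for
the involutions `s_i` of the field of rational functions. Expanding both sides of the braid relation
and clearing denominators, it reduces to a field identity which only uses that `s_i` and `s_{i+1}`
are involutions satisfying the braid relation themselves (as the transpositions in the symmetric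
group do) and how they permute `x_i, x_{i+1}, x_{i+2}`. -/

open Equiv

section IsobaricDivDiff

variable {K : Type*} [Field K]

def isobaricDivDiff (s : K →+* K) (a b f : K) : K :=
  (a * f - s (a * f)) / (a - b)

theorem isobaricDivDiff_braid (s t : K →+* K) {a b c : K}
    (hab : a ≠ b) (hbc : b ≠ c) (hac : a ≠ c)
    (hsa : s a = b) (hsb : s b = a) (hsc : s c = c)
    (hta : t a = a) (htb : t b = c) (htc : t c = b)
    (hss : ∀ g, s (s g) = g) (htt : ∀ g, t (t g) = g)
    (hst : ∀ g, t (s (t g)) = s (t (s g))) (f : K) :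
    isobaricDivDiff s a b (isobaricDivDiff t b c (isobaricDivDiff s a b f)) =
      isobaricDivDiff t b c (isobaricDivDiff s a b (isobaricDivDiff t b c f)) := by
  have hab' : a - b ≠ 0 := sub_ne_zero.mpr hab
  have hbc' : b - c ≠ 0 := sub_ne_zero.mpr hbc
  have hac' : a - c ≠ 0 := sub_ne_zero.mpr hac
  simp only [isobaricDivDiff, map_div₀, map_sub, map_mul, hsa, hsb, hsc, hta, htb, htc, hss, htt,
    hst]
  field_simp
  ring

end IsobaricDivDiff

theorem Equiv.swap_braid {α : Type*} [DecidableEq α] {a b c : α}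
    (hab : a ≠ b) (hbc : b ≠ c) (hac : a ≠ c) :
    swap b c * swap a b * swap b c = swap a b * swap b c * swap a b := by
  rw [swap_mul_swap_mul_swap hab hac, swap_comm a b, swap_comm b c,
    swap_mul_swap_mul_swap hbc.symm hac.symm, swap_comm]

section PermK

variable {N : ℕ}

def permK (σ : Perm (Fin N)) : KK N →+* KK N :=
  IsFractionRing.lift (g := (algebraMap (MvPolynomial (Fin N) ℚ) (KK N)).comp
      (rename σ).toRingHom)
    (by
      rw [RingHom.coe_comp]
      exact (IsFractionRing.injective _ _).comp (rename_injective _ σ.injective))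

theorem swapK_eq_permK (i j : Fin N) : swapK i j = permK (swap i j) := rfl

theorem permK_algebraMap (σ : Perm (Fin N)) (p : MvPolynomial (Fin N) ℚ) :
    permK σ (algebraMap _ _ p) = algebraMap _ _ (rename σ p) :=
  IsFractionRing.lift_algebraMap _ _

theorem permK_XV (σ : Perm (Fin N)) (k : Fin N) : permK σ (XV k) = XV (σ k) := by
  rw [XV, permK_algebraMap, rename_X, XV]

theorem permK_permK (σ τ : Perm (Fin N)) (g : KK N) :
    permK σ (permK τ g) = permK (σ * τ) g := by
  suffices (permK σ).comp (permK τ) = permK (σ * τ) from DFunLike.congr_fun this g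
  refine IsLocalization.ringHom_ext (nonZeroDivisors (MvPolynomial (Fin N) ℚ))
    (RingHom.ext fun p => ?_)
  simp only [RingHom.comp_apply, permK_algebraMap, rename_rename, Perm.coe_mul]

theorem permK_one_apply (g : KK N) : permK 1 g = g := by
  suffices permK (1 : Perm (Fin N)) = RingHom.id _ from DFunLike.congr_fun this g
  refine IsLocalization.ringHom_ext (nonZeroDivisors (MvPolynomial (Fin N) ℚ))
    (RingHom.ext fun p => ?_)
  simp [permK_algebraMap]

theorem swapK_swapK (i j : Fin N) (g : KK N) : swapK i j (swapK i j g) = g := by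
  rw [swapK_eq_permK, permK_permK, swap_mul_self, permK_one_apply]

theorem XV_injective : Function.Injective (XV (N := N)) :=
  (IsFractionRing.injective (MvPolynomial (Fin N) ℚ) (KK N)).comp X_injective

theorem dem_braid {a b c : Fin N} (hab : a ≠ b) (hbc : b ≠ c) (hac : a ≠ c) (f : KK N) :
    dem a b (dem b c (dem a b f)) = dem b c (dem a b (dem b c f)) := by
  refine isobaricDivDiff_braid (swapK a b) (swapK b c) (XV_injective.ne hab)
    (XV_injective.ne hbc) (XV_injective.ne hac) ?sa ?sb ?sc ?ta ?tb ?tc (swapK_swapK a b)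
    (swapK_swapK b c) ?braid f
  case sa => rw [swapK_eq_permK, permK_XV, swap_apply_left]
  case sb => rw [swapK_eq_permK, permK_XV, swap_apply_right]
  case sc => rw [swapK_eq_permK, permK_XV, swap_apply_of_ne_of_ne hac.symm hbc.symm]
  case ta => rw [swapK_eq_permK, permK_XV, swap_apply_of_ne_of_ne hab hac]
  case tb => rw [swapK_eq_permK, permK_XV, swap_apply_left]
  case tc => rw [swapK_eq_permK, permK_XV, swap_apply_right]
  case braid =>
    intro g
    simp only [swapK_eq_permK, permK_permK, ← mul_assoc, swap_braid hab hbc hac]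

end PermK

/-- the Demazure operators satisfy the braid relation
`π_i (π_{i+1} (π_i f)) = π_{i+1} (π_i (π_{i+1} f))` for every Laurent
polynomial `f` (indices 0-based, so we require `i + 2 < N`). -/
theorem demazure_braid (N i : ℕ) (hi : i + 2 < N)
    (f : KK N) :
    dem ⟨i, by omega⟩ ⟨i + 1, by omega⟩
        (dem ⟨i + 1, by omega⟩ ⟨i + 2, hi⟩
          (dem ⟨i, by omega⟩ ⟨i + 1, by omega⟩ f)) =
      dem ⟨i + 1, by omega⟩ ⟨i + 2, hi⟩
        (dem ⟨i, by omega⟩ ⟨i + 1, by omega⟩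
          (dem ⟨i + 1, by omega⟩ ⟨i + 2, hi⟩ f)) :=
  dem_braid (by simp [Fin.ext_iff]) (by simp [Fin.ext_iff]) (by simp [Fin.ext_iff]) f

end
end

section
/- Let 1 ≤ r ≤ N and let w be the longest element of the Young subgroup of S_N permuting the indices r, r+1, …, N. Then applying the composite Demazure operator π_w to h_m(x_1,…,x_r) yields h_m(x_1,…,x_N). -/
noncomputable section


open MvPolynomial

/-- The Demazure operator `π_i` (0-based index), identity if out of range. -/
def piNat {N : ℕ} (i : ℕ) (f : KK N) : KK N :=
  if h : i + 1 < N then dem ⟨i, by omega⟩ ⟨i + 1, h⟩ f else f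

/-- Apply the composite `π_{j_1} ∘ ⋯ ∘ π_{j_d}` for a word `[j_1, …, j_d]`. -/
def applyWord {N : ℕ} (l : List ℕ) (f : KK N) : KK N := l.foldr piNat f

/-- The canonical reduced word (with 0-based simple-reflection indices shifted
by `off`) for the longest element of the symmetric group on `len` consecutive
letters starting at position `off`. -/
def longWordFrom (off len : ℕ) : List ℕ :=
  (List.range len).flatMap fun k => (List.range k).reverse.map (· + off)

/-- `h_m(x_1, …, x_r)` inside the `N`-variable rational function field,
realized as the sum over weakly increasing maps `Fin m → Fin r`. -/
def hX {N : ℕ} (r : ℕ) (hr : r ≤ N) (m : ℕ) : KK N :=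
  ∑ f ∈ Finset.univ.filter (fun f : Fin m → Fin r => ∀ a b, a ≤ b → f a ≤ f b),
    ∏ i, XV (Fin.castLE hr (f i))

namespace DemAux
variable {N : ℕ}

lemma XV_ne (i j : Fin N) (h : i ≠ j) : XV i - XV j ≠ 0 := by
  rw [sub_ne_zero]
  intro hc
  exact h (by simpa using X_injective (IsFractionRing.injective (MvPolynomial (Fin N) ℚ) (KK N) (hc)))

lemma swapK_algebraMap (i j : Fin N) (p : MvPolynomial (Fin N) ℚ) :
    swapK i j (algebraMap _ (KK N) p) = algebraMap _ (KK N) (rename (Equiv.swap i j) p) := by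
  simp [swapK, IsFractionRing.lift_algebraMap]

lemma swapK_XV (i j k : Fin N) : swapK i j (XV k) = XV (Equiv.swap i j k) := by
  rw [XV, swapK_algebraMap, rename_X]; rfl

lemma swapK_swapK (i j : Fin N) (f : KK N) : swapK i j (swapK i j f) = f := by
  have : (swapK i j).comp (swapK i j) = RingHom.id (KK N) := by
    apply IsLocalization.ringHom_ext (nonZeroDivisors (MvPolynomial (Fin N) ℚ))
    ext p
    all_goals simp only [RingHom.comp_apply, RingHom.id_apply, swapK_algebraMap, rename_X,
      rename_C, Equiv.swap_apply_self]
  exact RingHom.congr_fun this f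


lemma hX_zero (r : ℕ) (hr : r ≤ N) : hX r hr 0 = 1 := by
  rw [hX]
  rw [Finset.sum_eq_single (fun x : Fin 0 => x.elim0)]
  · simp
  · intro b hb hne
    exact absurd (funext fun x => x.elim0) hne
  · intro h
    exact absurd (Finset.mem_filter.2 ⟨Finset.mem_univ _, fun a => a.elim0⟩) h

lemma swapK_hX (i j : Fin N) (r : ℕ) (hr : r ≤ N) (m : ℕ)
    (hi : r ≤ i.val) (hj : r ≤ j.val) :
    swapK i j (hX r hr m) = hX r hr m := by
  rw [hX, map_sum]
  refine Finset.sum_congr rfl fun f _ => ?_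
  rw [map_prod]
  refine Finset.prod_congr rfl fun k _ => ?_
  rw [swapK_XV, Equiv.swap_apply_of_ne_of_ne]
  · intro h
    have h2 := congrArg Fin.val h
    have h3 := (f k).isLt
    simp only [Fin.coe_castLE] at h2
    omega
  · intro h
    have h2 := congrArg Fin.val h
    have h3 := (f k).isLt
    simp only [Fin.coe_castLE] at h2
    omega


lemma snoc_mono {r m : ℕ} (g : Fin m → Fin (r+1)) (hg : ∀ a b, a ≤ b → g a ≤ g b) :
    ∀ a b : Fin (m+1), a ≤ b → Fin.snoc (α := fun _ => Fin (r+1)) g (Fin.last r) a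
      ≤ Fin.snoc (α := fun _ => Fin (r+1)) g (Fin.last r) b := by
  intro a b hab
  induction b using Fin.lastCases with
  | last => rw [Fin.snoc_last]; exact Fin.le_last _
  | cast b' =>
      induction a using Fin.lastCases with
      | last =>
          exact absurd (lt_of_le_of_lt hab (Fin.castSucc_lt_last b')) (lt_irrefl _)
      | cast a' =>
          rw [Fin.snoc_castSucc, Fin.snoc_castSucc]
          exact hg a' b' (by rwa [Fin.castSucc_le_castSucc_iff] at hab)

lemma hX_succ (r : ℕ) (h : r + 1 ≤ N) (m : ℕ) :
    hX (r+1) h (m+1)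
      = hX r (by omega) (m+1) + XV ⟨r, by omega⟩ * hX (r+1) h m := by
  have hA : ∑ f ∈ (Finset.univ.filter
        (fun f : Fin (m+1) → Fin (r+1) => ∀ a b, a ≤ b → f a ≤ f b)).filter
        (fun f => ¬ f (Fin.last m) = Fin.last r),
        ∏ k, XV (Fin.castLE h (f k))
      = ∑ g ∈ Finset.univ.filter
        (fun g : Fin (m+1) → Fin r => ∀ a b, a ≤ b → g a ≤ g b),
        ∏ k, XV (Fin.castLE (show r ≤ N by omega) (g k)) := by
    refine (Finset.sum_bij (i := fun g (_ : g ∈ _) => Fin.castSucc ∘ g) ?_ ?_ ?_ ?_).symm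
    · intro g hg
      simp only [Finset.mem_filter, Finset.mem_univ, true_and] at hg ⊢
      refine ⟨fun a b hab => Fin.castSucc_le_castSucc_iff.2 (hg a b hab), fun hc => ?_⟩
      have h2 := congrArg Fin.val hc
      have h3 := (g (Fin.last m)).isLt
      simp only [Function.comp_apply, Fin.coe_castSucc, Fin.val_last] at h2
      omega
    · intro g1 h1 g2 h2 heq
      funext k
      exact Fin.castSucc_injective _ (congrFun heq k)
    · intro f hf
      simp only [Finset.mem_filter, Finset.mem_univ, true_and] at hf
      obtain ⟨hmono, hne⟩ := hf
      have hlt : ∀ k, (f k).val < r := by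
        intro k
        have h1 := hmono k (Fin.last m) (Fin.le_last k)
        have h2 := (f (Fin.last m)).isLt
        have h3 : (f (Fin.last m)).val ≠ r := fun hc => hne (Fin.ext (by simp [hc]))
        rw [Fin.le_def] at h1
        omega
      refine ⟨fun k => ⟨(f k).val, hlt k⟩, ?_, ?_⟩
      · simp only [Finset.mem_filter, Finset.mem_univ, true_and]
        intro a b hab
        have h9 := hmono a b hab
        rw [Fin.le_def] at h9
        simp only [Fin.mk_le_mk]
        exact h9
      · funext k
        exact Fin.ext (by simp)
    · intro g hg
      refine Finset.prod_congr rfl fun k _ => ?_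
      exact congrArg XV (Fin.ext (by simp))
  have hB : ∑ f ∈ (Finset.univ.filter
        (fun f : Fin (m+1) → Fin (r+1) => ∀ a b, a ≤ b → f a ≤ f b)).filter
        (fun f => f (Fin.last m) = Fin.last r),
        ∏ k, XV (Fin.castLE h (f k))
      = XV ⟨r, by omega⟩ * ∑ g ∈ Finset.univ.filter
        (fun g : Fin m → Fin (r+1) => ∀ a b, a ≤ b → g a ≤ g b),
        ∏ k, XV (Fin.castLE h (g k)) := by
    rw [Finset.mul_sum]
    refine (Finset.sum_bij (i := fun g (_ : g ∈ _) => Fin.snoc g (Fin.last r)) ?_ ?_ ?_ ?_).symm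
    · intro g hg
      simp only [Finset.mem_filter, Finset.mem_univ, true_and] at hg ⊢
      exact ⟨snoc_mono g hg, Fin.snoc_last _ _⟩
    · intro g1 h1 g2 h2 heq
      funext k
      have h9 := congrFun heq (Fin.castSucc k)
      simpa only [Fin.snoc_castSucc] using h9
    · intro f hf
      simp only [Finset.mem_filter, Finset.mem_univ, true_and] at hf
      obtain ⟨hmono, htop⟩ := hf
      refine ⟨f ∘ Fin.castSucc, ?_, ?_⟩
      · simp only [Finset.mem_filter, Finset.mem_univ, true_and]
        intro a b hab
        exact hmono _ _ (Fin.castSucc_le_castSucc_iff.2 hab)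
      · funext k
        induction k using Fin.lastCases with
        | last => simp only [Fin.snoc_last, htop]
        | cast k' => simp only [Fin.snoc_castSucc]; rfl
    · intro g hg
      rw [Fin.prod_univ_castSucc, mul_comm]
      congr 1
      · exact Finset.prod_congr rfl fun k _ => by rw [Fin.snoc_castSucc]
      · rw [Fin.snoc_last]
        exact congrArg XV (Fin.ext (by simp))
  rw [hX, hX, hX,
    ← Finset.sum_filter_add_sum_filter_not
      (Finset.univ.filter
        (fun f : Fin (m+1) → Fin (r+1) => ∀ a b, a ≤ b → f a ≤ f b))
      (fun f => f (Fin.last m) = Fin.last r), hA, hB, add_comm]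


lemma keyC (i : ℕ) (h2 : i + 2 ≤ N) (m : ℕ) :
    XV ⟨i, by omega⟩ * hX (i+1) (by omega) m
      - XV ⟨i+1, by omega⟩ *
          swapK ⟨i, by omega⟩ ⟨i+1, by omega⟩ (hX (i+1) (by omega) m)
    = (XV ⟨i, by omega⟩ - XV ⟨i+1, by omega⟩) * hX (i+2) h2 m := by
  induction m with
  | zero => rw [hX_zero, hX_zero, map_one]; ring
  | succ m ih =>
      have e1 := hX_succ (N := N) i (by omega) m
      have e2 := hX_succ (N := N) (i+1) (by omega) m
      have e1s := congrArg (swapK (⟨i, by omega⟩ : Fin N) ⟨i+1, by omega⟩) e1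
      rw [map_add, map_mul, swapK_XV, Equiv.swap_apply_left,
        swapK_hX _ _ i (by omega) (m+1) le_rfl (by simp)] at e1s
      rw [e1s, e2, e1]
      linear_combination XV (⟨i+1, by omega⟩ : Fin N) * ih

lemma swapK_hX_adj (i : ℕ) (h2 : i + 2 ≤ N) (R : ℕ) (hiR : i + 2 ≤ R) (hR : R ≤ N)
    (m : ℕ) :
    swapK ⟨i, by omega⟩ ⟨i+1, by omega⟩ (hX R hR m) = hX R hR m := by
  induction R, hiR using Nat.le_induction generalizing m with
  | base =>
      have hc := keyC i h2 m
      have hcs := congrArg (swapK (⟨i, by omega⟩ : Fin N) ⟨i+1, by omega⟩) hc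
      simp only [map_sub, map_mul, swapK_XV, Equiv.swap_apply_left,
        Equiv.swap_apply_right, swapK_swapK] at hcs
      have hne : XV (⟨i, by omega⟩ : Fin N) - XV ⟨i+1, by omega⟩ ≠ 0 :=
        XV_ne _ _ (by simp [Fin.ext_iff])
      have key : (XV (⟨i, by omega⟩ : Fin N) - XV ⟨i+1, by omega⟩) *
          (swapK ⟨i, by omega⟩ ⟨i+1, by omega⟩ (hX (i+2) hR m) - hX (i+2) hR m) = 0 := by
        linear_combination hc + hcs
      rcases mul_eq_zero.1 key with hk | hk
      · exact absurd hk hne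
      · exact sub_eq_zero.1 hk
  | succ R hiR' ih =>
      induction m with
      | zero => rw [hX_zero, map_one]
      | succ m ihm =>
          rw [hX_succ R hR m, map_add, map_mul, swapK_XV,
            Equiv.swap_apply_of_ne_of_ne (by simp [Fin.ext_iff]; omega)
              (by simp [Fin.ext_iff]; omega),
            ih (by omega) (m+1), ihm]


lemma hX_congr (r r' : ℕ) (h : r = r') (hr : r ≤ N) (m : ℕ) :
    hX r hr m = hX r' (h ▸ hr) m := by subst h; rfl

lemma piNat_hX_step (i : ℕ) (h2 : i + 2 ≤ N) (m : ℕ) :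
    piNat i (hX (i+1) (by omega) m) = hX (i+2) h2 m := by
  rw [piNat, dif_pos (show i + 1 < N by omega), dem, map_mul, swapK_XV,
    Equiv.swap_apply_left, div_eq_iff (XV_ne _ _ (by simp [Fin.ext_iff]))]
  linear_combination keyC i h2 m

lemma piNat_fix (i R : ℕ) (hiR : i + 2 ≤ R) (hR : R ≤ N) (m : ℕ) :
    piNat i (hX R hR m) = hX R hR m := by
  rw [piNat]
  split
  · rw [dem, map_mul, swapK_XV, Equiv.swap_apply_left,
      swapK_hX_adj i (by omega) R hiR hR m,
      div_eq_iff (XV_ne _ _ (by simp [Fin.ext_iff]))]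
    ring
  · rfl

lemma applyWord_append (l1 l2 : List ℕ) (f : KK N) :
    applyWord (l1 ++ l2) f = applyWord l1 (applyWord l2 f) :=
  List.foldr_append

lemma applyWord_fix (l : List ℕ) (R : ℕ) (hR : R ≤ N) (m : ℕ)
    (hl : ∀ j ∈ l, j + 2 ≤ R) : applyWord l (hX R hR m) = hX R hR m := by
  induction l with
  | nil => rfl
  | cons a t ih =>
      have : applyWord (a :: t) (hX R hR m) = piNat a (applyWord t (hX R hR m)) := rfl
      rw [this, ih (fun j hj => hl j (List.mem_cons_of_mem a hj)),
        piNat_fix a R (hl a List.mem_cons_self) hR m]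

lemma block_apply (off k : ℕ) (h : off + 1 + k ≤ N) (m : ℕ) :
    applyWord ((List.range k).reverse.map (· + off)) (hX (off+1) (by omega) m)
      = hX (off+1+k) h m := by
  induction k with
  | zero =>
      simp only [List.range_zero, List.reverse_nil, List.map_nil]
      exact hX_congr _ _ (by omega) _ m
  | succ k ih =>
      have hrev : (List.range (k+1)).reverse = k :: (List.range k).reverse := by
        rw [List.range_succ, List.reverse_append, List.reverse_singleton]
        rfl
      rw [hrev, List.map_cons]
      have hstep : applyWord (N := N) ((k + off) :: (List.range k).reverse.map (· + off))
            (hX (off+1) (by omega) m)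
          = piNat (k + off)
              (applyWord ((List.range k).reverse.map (· + off)) (hX (off+1) (by omega) m)) := rfl
      rw [hstep, ih (by omega),
        hX_congr (off+1+k) (k+off+1) (by omega) (by omega) m,
        piNat_hX_step (k+off) (by omega) m,
        hX_congr (k+off+2) (off+1+(k+1)) (by omega) (by omega) m]


end DemAux

open DemAux

/-- for `1 ≤ r ≤ N` and `w` the longest element of the Young
subgroup of `S_N` permuting the (1-based) indices `r, r+1, …, N`,
`π_w (h_m(x_1, …, x_r)) = h_m(x_1, …, x_N)`. -/
theorem demazure_longest_young_h (N r m : ℕ) (hr1 : 1 ≤ r) (hr2 : r ≤ N) :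
    applyWord (longWordFrom (r - 1) (N - r + 1)) (hX r hr2 m) =
      hX N le_rfl m := by
  set off := r - 1 with hoff
  have hsplit : longWordFrom off (N - r + 1)
      = longWordFrom off (N - r) ++ (List.range (N - r)).reverse.map (· + off) := by
    rw [longWordFrom, List.range_succ, List.flatMap_append]
    congr 1
    simp [longWordFrom]
  rw [hsplit, applyWord_append,
    hX_congr r (off+1) (by omega) hr2 m,
    block_apply off (N - r) (by omega) m,
    hX_congr (off+1+(N-r)) N (by omega) (by omega) m]
  apply applyWord_fix
  intro j hj
  rw [longWordFrom, List.mem_flatMap] at hj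
  obtain ⟨kk, hk1, hk2⟩ := hj
  rw [List.mem_range] at hk1
  rw [List.mem_map] at hk2
  obtain ⟨j', hj1, hj2⟩ := hk2
  rw [List.mem_reverse, List.mem_range] at hj1
  omega


end
end

section
/- For every (k,k)-Dyck path π, dinv(π) = maxtdinv(π). Here dinv(π) is the number of pairs (e,f) where e is an east step of π, f is a north step of π strictly to the right of e, and some line of slope s_− = 1−ε (for sufficiently small ε > 0) intersects both e and f; and maxtdinv(π) is the number of attacking pairs of north steps of π, where north steps are ordered by the distance of their southern endpoints to the line y = s_−·x, and a north step z attacks exactly the north steps greater than z in this sweeping order but less than the north step directly above z's northern endpoint. -/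
noncomputable section

/- A `(k,k)`-Dyck path is encoded by the columns of its north steps: a
monotone function `c : Fin k → ℕ` with `c r ≤ r` (the north step in row `r`,
0-based, goes from `(c r, r)` to `(c r, r+1)`).  East steps at height `b`
(`1 ≤ b ≤ k`) have left endpoints `(a, b)` for `cext (b-1) ≤ a < cext b`,
where `cext` extends `c` by `cext k = k`. -/

/-- Extension of the column function by `k` past the top. -/
def cext (k : ℕ) (c : Fin k → ℕ) (j : ℕ) : ℕ :=
  if h : j < k then c ⟨j, h⟩ else k

/-- `(a, b)` is the left endpoint of an east step of the path. -/
abbrev IsEast (k : ℕ) (c : Fin k → ℕ) (a b : ℕ) : Prop :=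
  1 ≤ b ∧ b ≤ k ∧ cext k c (b - 1) ≤ a ∧ a < cext k c b

/-- `dinv(π)`: the number of pairs `(e, f)` of an east step `e` with left
endpoint `(a, b)` and a north step `f` with bottom endpoint `(c r, r)`, with
`f` strictly to the right of `e` (`c r > a`), such that some line of slope
`1 - ε` (for all sufficiently small `ε > 0`) meets both steps.  Writing
`δ = c r - a ≥ 1` and `d = b - r` (an integer), this is equivalent to the
explicit condition `δ = 1 ∧ d = 0`, or `δ ≥ 2 ∧ d ∈ {1 - δ, 2 - δ}`. -/
def dinv (k : ℕ) (c : Fin k → ℕ) : ℕ :=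
  (((Finset.range (k + 1) ×ˢ Finset.range (k + 1)) ×ˢ
      (Finset.univ : Finset (Fin k))).filter fun q =>
    IsEast k c q.1.1 q.1.2 ∧ q.1.1 < c q.2 ∧
      ((c q.2 = q.1.1 + 1 ∧ q.1.2 = (q.2 : ℕ)) ∨
        (q.1.1 + 2 ≤ c q.2 ∧
          (q.1.2 + c q.2 = (q.2 : ℕ) + q.1.1 + 1 ∨
            q.1.2 + c q.2 = (q.2 : ℕ) + q.1.1 + 2)))).card

/-- The north step in row `z` (bottom endpoint `(c z, z)`) attacks the north
step in row `z'` (bottom endpoint `(c z', z')`): ordering north steps by the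
distance of their southern endpoints to the line `y = (1-ε)x`, `z` attacks
exactly the north steps greater than `z` in this sweeping order but less than
the north step directly above `z`'s northern endpoint.  Explicitly:
either `z'` is on the same diagonal with a larger column
(`z' - c z' = z - c z` and `c z' > c z`), or on the next diagonal with a
smaller column (`z' - c z' = z - c z + 1` and `c z' < c z`). -/
abbrev Attacks (k : ℕ) (c : Fin k → ℕ) (z z' : Fin k) : Prop :=
  (c z < c z' ∧ (z' : ℕ) + c z = (z : ℕ) + c z') ∨
    (c z' < c z ∧ (z' : ℕ) + c z = (z : ℕ) + c z' + 1)

/-- `maxtdinv(π)`: the number of attacking pairs of north steps. -/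
def maxtdinv (k : ℕ) (c : Fin k → ℕ) : ℕ :=
  ((Finset.univ : Finset (Fin k × Fin k)).filter fun p =>
    Attacks k c p.1 p.2).card

/-! Fix a north step `r`, on diagonal `D = r - c r`. The pairs counted by `dinv` with north step
`r` are the east steps below row `r` whose right endpoint lies on diagonal `D` or `D + 1`; the
attacking pairs containing `r` are given by the north steps below row `r` whose bottom endpoint
lies on diagonal `D` (they attack `r`) or `D + 1` (they are attacked by `r`). So it suffices
that, below a row whose diagonal is at most `t`, as many east steps end on diagonal `t` as north
steps start on it.

Read row by row, the diagonal of the last lattice point of the path in row `i` is a walk that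
starts at `0` and rises by at most one per row. Row `i + 1` has an east step ending on diagonal
`t` exactly when the walk steps from `≥ t` to `≤ t`, and row `i` has a north step starting on
diagonal `t` exactly when the walk is at `t`; a walk climbing by unit steps at most visits `t`
once per such descent, up to a correction at the final time. -/

open scoped Finset

lemma card_visits_eq_card_downcrossings_add (d : ℕ → ℕ) (h0 : d 0 = 0)
    (hstep : ∀ i, d (i + 1) ≤ d i + 1) (t M : ℕ) :
    #{i ∈ Finset.range M | d i = t}
      = #{i ∈ Finset.range M | t ≤ d i ∧ d (i + 1) ≤ t} + if t < d M then 1 else 0 := by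
  induction M with
  | zero => simp [h0]
  | succ M ih =>
    have := hstep M
    simp only [Finset.card_filter, Finset.sum_range_succ] at ih ⊢
    split_ifs at ih ⊢ <;> omega

namespace DyckPath

variable {k : ℕ} (c : Fin k → ℕ)

lemma cext_of_lt {j : ℕ} (h : j < k) : cext k c j = c ⟨j, h⟩ :=
  dif_pos h

/-- The diagonal `i - x` of the last lattice point `(x, i)` of the path in row `i`. -/
def diag (i : ℕ) : ℕ := i - cext k c i

lemma diag_zero : diag c 0 = 0 := by
  simp [diag]

lemma diag_val (r : Fin k) : diag c r = r - c r := by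
  rw [diag, cext_of_lt c r.isLt]

def eastStepsToDiag (t M : ℕ) : Finset (ℕ × ℕ) :=
  {e ∈ Finset.range (k + 1) ×ˢ Finset.range (k + 1) |
    IsEast k c e.1 e.2 ∧ e.2 = e.1 + t + 1 ∧ e.2 ≤ M}

def northStepsOnDiag (t M : ℕ) : Finset (Fin k) :=
  {z | (z : ℕ) = c z + t ∧ (z : ℕ) < M}

variable {c}

lemma cext_le (hdiag : ∀ r : Fin k, c r ≤ (r : ℕ)) (j : ℕ) : cext k c j ≤ j := by
  unfold cext
  split
  · exact hdiag _
  · omega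

lemma cext_le_cext_succ (hmono : Monotone c) (hdiag : ∀ r : Fin k, c r ≤ (r : ℕ)) (j : ℕ) :
    cext k c j ≤ cext k c (j + 1) := by
  by_cases hj : j + 1 < k
  · rw [cext_of_lt c (by omega : j < k), cext_of_lt c hj]
    exact hmono (Fin.mk_le_mk.mpr j.le_succ)
  · rw [show cext k c (j + 1) = k from dif_neg hj]
    unfold cext
    split
    · exact (hdiag _).trans (by omega)
    · rfl

lemma diag_succ_le (hmono : Monotone c) (hdiag : ∀ r : Fin k, c r ≤ (r : ℕ)) (i : ℕ) :
    diag c (i + 1) ≤ diag c i + 1 := by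
  have := cext_le hdiag i
  have := cext_le_cext_succ hmono hdiag i
  unfold diag
  omega

lemma card_eastStepsToDiag (hdiag : ∀ r : Fin k, c r ≤ (r : ℕ)) {M : ℕ} (hM : M ≤ k) (t : ℕ) :
    #(eastStepsToDiag c t M)
      = #{i ∈ Finset.range M | t ≤ diag c i ∧ diag c (i + 1) ≤ t} := by
  refine Finset.card_bij' (fun e _ => e.2 - 1) (fun i _ => (i - t, i + 1)) ?_ ?_ ?_ ?_
  · rintro ⟨a, b⟩ h
    simp only [eastStepsToDiag, Finset.mem_filter, Finset.mem_product, Finset.mem_range] at h ⊢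
    obtain ⟨-, ⟨-, -, ha₁, ha₂⟩, rfl, hbM⟩ := h
    have := cext_le hdiag (a + t + 1)
    simp only [diag, Nat.add_sub_cancel] at ha₁ ⊢
    omega
  · intro i h
    simp only [eastStepsToDiag, Finset.mem_filter, Finset.mem_product, Finset.mem_range] at h ⊢
    have := cext_le hdiag i
    have := cext_le hdiag (i + 1)
    simp only [diag, IsEast, add_tsub_cancel_right] at h ⊢
    omega
  · rintro ⟨a, b⟩ h
    simp only [eastStepsToDiag, Finset.mem_filter] at h
    simp only [Prod.mk.injEq]
    omega
  · intro i h
    simp only [Finset.mem_filter, Finset.mem_range] at h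
    have := cext_le hdiag i
    simp only [diag] at h
    omega

lemma card_northStepsOnDiag (hdiag : ∀ r : Fin k, c r ≤ (r : ℕ)) {M : ℕ} (hM : M ≤ k) (t : ℕ) :
    #(northStepsOnDiag c t M) = #{i ∈ Finset.range M | diag c i = t} := by
  refine Finset.card_bij (fun z _ => (z : ℕ)) ?_ (fun _ _ _ _ => Fin.ext) ?_
  · intro z hz
    simp only [northStepsOnDiag, Finset.mem_filter, Finset.mem_univ, true_and] at hz
    simp only [Finset.mem_filter, Finset.mem_range, diag_val]
    omega
  · intro i hi
    simp only [Finset.mem_filter, Finset.mem_range] at hi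
    have hik : i < k := by omega
    have hci : c ⟨i, hik⟩ ≤ i := hdiag ⟨i, hik⟩
    have hdi : diag c i = i - c ⟨i, hik⟩ := diag_val c ⟨i, hik⟩
    refine ⟨⟨i, hik⟩, ?_, rfl⟩
    simp only [northStepsOnDiag, Finset.mem_filter, Finset.mem_univ, true_and]
    omega

theorem card_eastStepsToDiag_eq_card_northStepsOnDiag (hmono : Monotone c)
    (hdiag : ∀ r : Fin k, c r ≤ (r : ℕ)) {t M : ℕ} (hM : M ≤ k) (ht : diag c M ≤ t) :
    #(eastStepsToDiag c t M) = #(northStepsOnDiag c t M) := by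
  rw [card_eastStepsToDiag hdiag hM, card_northStepsOnDiag hdiag hM,
    card_visits_eq_card_downcrossings_add _ (diag_zero c) (diag_succ_le hmono hdiag),
    if_neg (not_lt.mpr ht), add_zero]

lemma dinv_eq_sum_card_eastStepsToDiag (hdiag : ∀ r : Fin k, c r ≤ (r : ℕ)) :
    dinv k c = ∑ r : Fin k,
      (#(eastStepsToDiag c (r - c r) r) + #(eastStepsToDiag c (r - c r + 1) r)) := by
  simp only [dinv, eastStepsToDiag, Finset.card_filter, Finset.sum_product_right,
    ← Finset.sum_add_distrib]
  refine Finset.sum_congr rfl fun r _ => Finset.sum_congr rfl fun b _ =>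
    Finset.sum_congr rfl fun a _ => ?_
  have := hdiag r
  split_ifs <;> omega

lemma maxtdinv_eq_sum_card_northStepsOnDiag (hdiag : ∀ r : Fin k, c r ≤ (r : ℕ)) :
    maxtdinv k c = ∑ r : Fin k,
      (#(northStepsOnDiag c (r - c r) r) + #(northStepsOnDiag c (r - c r + 1) r)) := by
  simp only [maxtdinv, northStepsOnDiag, Finset.card_filter, Finset.sum_add_distrib]
  conv_rhs => arg 1; rw [Finset.sum_comm]
  rw [Fintype.sum_prod_type, ← Finset.sum_add_distrib]
  refine Finset.sum_congr rfl fun x _ => ?_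
  rw [← Finset.sum_add_distrib]
  refine Finset.sum_congr rfl fun y _ => ?_
  have := hdiag x
  have := hdiag y
  have : (x : ℕ) = y → c x = c y := fun h => congrArg c (Fin.ext h)
  dsimp only [Attacks]
  split_ifs <;> omega

end DyckPath

/-- for every `(k,k)`-Dyck path `π`, `dinv(π) = maxtdinv(π)`. -/
theorem dinv_eq_maxtdinv (k : ℕ) (c : Fin k → ℕ) (hmono : Monotone c)
    (hdiag : ∀ r : Fin k, c r ≤ (r : ℕ)) :
    dinv k c = maxtdinv k c := by
  rw [DyckPath.dinv_eq_sum_card_eastStepsToDiag hdiag,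
    DyckPath.maxtdinv_eq_sum_card_northStepsOnDiag hdiag]
  refine Finset.sum_congr rfl fun r _ => ?_
  have hr := DyckPath.diag_val c r
  congr 1 <;>
    exact DyckPath.card_eastStepsToDiag_eq_card_northStepsOnDiag hmono hdiag r.isLt.le (by omega)

end
end

section
/- Corner-flip recursion for flagged row LLT polynomials: let π be an r-partial d-Dyck path, Σ a marking of π, and (i,j) ∈ Σ a marked corner. Let π* be the path obtained from π by flipping the corner (i,j) (replacing the east-north pair of steps bordering the box (i,j) by a north-east pair, so that (i,j) lies below π*), and set Σ* = Σ \ {(i,j)}. Then, as polynomials in x_1,…,x_M (for any number M of variables), (t − 1)·G_r(π, Σ) = G_r(π*, Σ*) − G_r(π, Σ*). -/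
noncomputable section

open MvPolynomial

/- An `r`-partial `d`-Dyck path (a north/east lattice path from `(0, r)` to
`(d, d)` weakly above the diagonal) is encoded via the full path `N^r π` by
the columns of its north steps: a monotone `γ : Fin d → ℕ` with `γ j ≤ j`
and `γ j = 0` for `j < r`.  In 0-based coordinates, the box `(i, j)` (with
`i < j`) lies in `Area(π)` iff `γ j ≤ i`, and `(i, j)` is a corner of `π`
iff `γ j = i + 1` and `γ (j - 1) ≤ i`. -/

/-- The coefficient ring `ℚ[t]` and polynomial ring in `x_1, …, x_M`. -/
abbrev RM (M : ℕ) : Type := MvPolynomial (Fin M) (Polynomial ℚ)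

/-- The parameter `t`. -/
def tq {M : ℕ} : RM M := C Polynomial.X

/-- `Area(π)` as a set of (0-based) pairs. -/
def area (d : ℕ) (γ : Fin d → ℕ) : Finset (Fin d × Fin d) :=
  Finset.univ.filter fun p => (p.1 : ℕ) < (p.2 : ℕ) ∧ γ p.2 ≤ (p.1 : ℕ)

/-- `T` is a flagged `(π, Σ)`-row semistandard word: `T (j) ≤ T (i)` for
every marked corner `(i,j) ∈ Σ`, and `T i ≤ i` (1-based) for the first `r`
positions. -/
abbrev IsFlaggedWord (M d r : ℕ) (Sg : Finset (Fin d × Fin d))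
    (T : Fin d → Fin M) : Prop :=
  (∀ p ∈ Sg, T p.2 ≤ T p.1) ∧ ∀ i : Fin d, (i : ℕ) < r → (T i : ℕ) ≤ (i : ℕ)

/-- `inv(T) = #{(i,j) ∈ Area(π) : T j ≤ T i}`. -/
def invT {M d : ℕ} (γ : Fin d → ℕ) (T : Fin d → Fin M) : ℕ :=
  ((area d γ).filter fun p => T p.2 ≤ T p.1).card

/-- The flagged row LLT polynomial `G_r(π, Σ)(x_1, …, x_M; t)`. -/
def G (M d r : ℕ) (γ : Fin d → ℕ) (Sg : Finset (Fin d × Fin d)) : RM M :=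
  ∑ T ∈ Finset.univ.filter (IsFlaggedWord M d r Sg),
    tq ^ invT γ T * ∏ i, X (T i)

/- Flipping the corner `(i, j)` adds exactly the box `(i, j)` to the area, so `inv` grows by one
on the words with `T j ≤ T i` and is unchanged on the others. Among the words allowed by `Σ*`,
those with `T j ≤ T i` are precisely the words allowed by `Σ`; hence the difference
`G_r(π*, Σ*) - G_r(π, Σ*)` collects `(t - 1) t^inv(T) x^T` over exactly the words counted by
`G_r(π, Σ)`. -/

theorem area_update_of_corner {d : ℕ} {γ : Fin d → ℕ} {i j : Fin d} (hij : (i : ℕ) < j)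
    (hγj : γ j = (i : ℕ) + 1) :
    area d (Function.update γ j (i : ℕ)) = insert (i, j) (area d γ) := by
  ext ⟨a, b⟩
  simp only [area, Finset.mem_insert, Finset.mem_filter, Finset.mem_univ, true_and, Prod.mk.injEq]
  rcases eq_or_ne b j with rfl | hb
  · rw [Function.update_self, hγj, ← Fin.val_inj]
    omega
  · rw [Function.update_of_ne hb]
    tauto

theorem invT_update_of_corner {M d : ℕ} {γ : Fin d → ℕ} {i j : Fin d} (hij : (i : ℕ) < j)
    (hγj : γ j = (i : ℕ) + 1) (T : Fin d → Fin M) :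
    invT (Function.update γ j (i : ℕ)) T = invT γ T + if T j ≤ T i then 1 else 0 := by
  have hnotin : (i, j) ∉ area d γ := by simp [area, hγj]
  rw [invT, invT, area_update_of_corner hij hγj, Finset.filter_insert]
  split_ifs
  · exact Finset.card_insert_of_notMem fun h => hnotin (Finset.mem_of_mem_filter _ h)
  · rfl

theorem isFlaggedWord_iff_erase {M d r : ℕ} {Sg : Finset (Fin d × Fin d)} {p : Fin d × Fin d}
    (hp : p ∈ Sg) (T : Fin d → Fin M) :
    IsFlaggedWord M d r Sg T ↔ IsFlaggedWord M d r (Sg.erase p) T ∧ T p.2 ≤ T p.1 := by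
  constructor
  · rintro ⟨hSg, hflag⟩
    exact ⟨⟨fun q hq => hSg q (Finset.mem_of_mem_erase hq), hflag⟩, hSg p hp⟩
  · rintro ⟨⟨hSg, hflag⟩, hTp⟩
    refine ⟨fun q hq => ?_, hflag⟩
    rcases eq_or_ne q p with rfl | hqp
    · exact hTp
    · exact hSg q (Finset.mem_erase.2 ⟨hqp, hq⟩)

theorem filter_isFlaggedWord_eq_filter_erase {M d r : ℕ} {Sg : Finset (Fin d × Fin d)}
    {p : Fin d × Fin d} (hp : p ∈ Sg) :
    Finset.univ.filter (IsFlaggedWord M d r Sg) =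
      (Finset.univ.filter (IsFlaggedWord M d r (Sg.erase p))).filter
        fun T => T p.2 ≤ T p.1 := by
  ext T
  simp only [Finset.mem_filter, Finset.mem_univ, true_and, isFlaggedWord_iff_erase hp T]

theorem corner_flip_recursion_general (M d r : ℕ) (γ : Fin d → ℕ)
    (Sg : Finset (Fin d × Fin d))
    (hSg : ∀ p ∈ Sg, (p.1 : ℕ) < (p.2 : ℕ) ∧ γ p.2 = (p.1 : ℕ) + 1 ∧
      ∀ j' : Fin d, (j' : ℕ) + 1 = (p.2 : ℕ) → γ j' ≤ (p.1 : ℕ))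
    (i₀ j₀ : Fin d) (hmem : (i₀, j₀) ∈ Sg) :
    (tq - 1) * G M d r γ Sg =
      G M d r (Function.update γ j₀ (i₀ : ℕ)) (Sg.erase (i₀, j₀)) -
        G M d r γ (Sg.erase (i₀, j₀)) := by
  obtain ⟨hij, hγj, -⟩ := hSg _ hmem
  rw [G, G, G, ← Finset.sum_sub_distrib, Finset.mul_sum,
    filter_isFlaggedWord_eq_filter_erase (r := r) hmem, Finset.sum_filter]
  refine Finset.sum_congr rfl fun T _ => ?_
  rw [invT_update_of_corner hij hγj]
  split_ifs <;> ring

/-- corner-flip recursion for flagged row LLT polynomials.  If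
`(i₀, j₀) ∈ Σ` is a marked corner of `π`, `π*` is obtained by flipping the
corner `(i₀, j₀)` inside out (so `γ* = update γ j₀ i₀`), and
`Σ* = Σ \ {(i₀,j₀)}`, then `(t - 1)·G_r(π, Σ) = G_r(π*, Σ*) - G_r(π, Σ*)`. -/
theorem corner_flip_recursion (M d r : ℕ) (hrd : r ≤ d) (γ : Fin d → ℕ)
    (hmono : Monotone γ) (hdiag : ∀ j : Fin d, γ j ≤ (j : ℕ))
    (hflag : ∀ j : Fin d, (j : ℕ) < r → γ j = 0)
    (Sg : Finset (Fin d × Fin d))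
    (hSg : ∀ p ∈ Sg, (p.1 : ℕ) < (p.2 : ℕ) ∧ γ p.2 = (p.1 : ℕ) + 1 ∧
      ∀ j' : Fin d, (j' : ℕ) + 1 = (p.2 : ℕ) → γ j' ≤ (p.1 : ℕ))
    (i₀ j₀ : Fin d) (hmem : (i₀, j₀) ∈ Sg) :
    (tq - 1) * G M d r γ Sg =
      G M d r (Function.update γ j₀ (i₀ : ℕ)) (Sg.erase (i₀, j₀)) -
        G M d r γ (Sg.erase (i₀, j₀)) :=
  corner_flip_recursion_general M d r γ Sg hSg i₀ j₀ hmem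

end
end

section
/- Non-attacking reduction for signed flagged row LLT polynomials with empty marking: for an r-partial d-Dyck path π (over variables x_1,…,x_M), the signed flagged row LLT polynomial G^±_r(π, ∅) equals (1−t)^{d−r} times the sum Σ_T t^{inv(T)} x^T over non-attacking flagged (π,∅)-row semistandard words T with positive entries, i.e., words T: {1,…,d} → {1,…,M} with T(i) ≤ i for i ≤ r and T(i) ≠ T(j) for all (i,j) ∈ Area(π), where inv(T) = #{(i,j) ∈ Area(π) : T(j) ≤ T(i)}. -/
noncomputable section

open MvPolynomial

/-- The strict order on the super alphabet:
`1 < 1̄ < 2 < 2̄ < ⋯` (unbarred before barred of the same value). -/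
abbrev Llt {M : ℕ} (a b : Fin M × Bool) : Prop :=
  a.1 < b.1 ∨ (a.1 = b.1 ∧ a.2 = false ∧ b.2 = true)

/-- The pair of letters `a b` is row-increasing: `a < b`, or `a = b` both
unbarred. -/
abbrev RowInc {M : ℕ} (a b : Fin M × Bool) : Prop :=
  Llt a b ∨ (a = b ∧ a.2 = false)

/-- `T` is a flagged `(π, ∅)`-row super word: `T i ≤ i` (as letters, with `i`
the unbarred letter `i`, 1-based) for the first `r` positions. -/
abbrev IsFlaggedSuperWord (M d r : ℕ) (T : Fin d → Fin M × Bool) : Prop :=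
  ∀ i : Fin d, (i : ℕ) < r →
    ((T i).1 : ℕ) < (i : ℕ) ∨ (((T i).1 : ℕ) = (i : ℕ) ∧ (T i).2 = false)

/-- `inv(T)` for a super word:
`#{(i,j) ∈ Area(π) : T(j) T(i) is row-increasing}`. -/
def invS {M d : ℕ} (γ : Fin d → ℕ) (T : Fin d → Fin M × Bool) : ℕ :=
  ((area d γ).filter fun p => RowInc (T p.2) (T p.1)).card

/-- The number of barred (negative) letters of `T`. -/
def mneg {M d : ℕ} (T : Fin d → Fin M × Bool) : ℕ :=
  (Finset.univ.filter fun i => (T i).2 = true).card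

/-- The signed flagged row LLT polynomial `G^±_r(π, ∅)(x_1, …, x_M; t)`. -/
def Gpm (M d r : ℕ) (γ : Fin d → ℕ) : RM M :=
  ∑ T ∈ Finset.univ.filter (IsFlaggedSuperWord M d r),
    tq ^ invS γ T * (-tq) ^ mneg T * ∏ i, X (T i).1

/-- `inv(T)` for a positive word: `#{(i,j) ∈ Area(π) : T j ≤ T i}`. -/
def invP {M d : ℕ} (γ : Fin d → ℕ) (T : Fin d → Fin M) : ℕ :=
  ((area d γ).filter fun p => T p.2 ≤ T p.1).card

/-!
Write a super word as a pair of a positive word `P` and a set of bars `ε`. Its weight factors as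
`t ^ #{(i, j) ∈ Area | P j < P i}` times a product over positions: an unbarred `j` contributes
`t ^ a_j`, with `a_j` the number of `i` attacking `j` with `P i = P j`, and a barred `j` contributes
`-t`. Summing over the bars therefore gives a product of factors `t ^ a_j - t` (just `t ^ a_j` where
the flag forbids a bar, `0` where it forbids the letter). If `P` is attacking, the smallest attacked
position has exactly one attacker, since by monotonicity of `γ` two attackers attack each other;
its factor `t - t` vanishes. If `P` is non-attacking, all `a_j = 0` and the flag forces `P j = j`
on the first `r` positions, leaving `(1 - t) ^ (d - r)`.
-/

open Finset

lemma Fin.apply_eq_val_of_le_val {d r : ℕ} {f : Fin d → ℕ}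
    (hle : ∀ j : Fin d, (j : ℕ) < r → f j ≤ j)
    (hne : ∀ i j : Fin d, i < j → (j : ℕ) < r → f i ≠ f j) (j : Fin d) (hjr : (j : ℕ) < r) :
    f j = j := by
  induction j using WellFoundedLT.induction with
  | ind j ih =>
  refine (hle j hjr).eq_of_not_lt fun hlt => ?_
  have hi : (⟨f j, hlt.trans j.isLt⟩ : Fin d) < j := Fin.lt_def.mpr hlt
  exact hne _ j hi hjr (ih _ hi (hlt.trans hjr))

namespace SignedLLT

variable {M d : ℕ}

lemma mem_area {γ : Fin d → ℕ} {p : Fin d × Fin d} :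
    p ∈ area d γ ↔ (p.1 : ℕ) < p.2 ∧ γ p.2 ≤ p.1 := by
  simp [area]

lemma rowInc_mk_iff (a b : Fin M) (x y : Bool) :
    RowInc (a, x) (b, y) ↔ a < b ∨ (a = b ∧ x = false) := by
  cases x <;> cases y <;> simp [RowInc, Llt, Prod.ext_iff]

def attackers (γ : Fin d → ℕ) (P : Fin d → Fin M) (j : Fin d) : Finset (Fin d) :=
  {i | (i, j) ∈ area d γ ∧ P i = P j}

lemma mem_attackers {γ : Fin d → ℕ} {P : Fin d → Fin M} {i j : Fin d} :
    i ∈ attackers γ P j ↔ (i : ℕ) < j ∧ γ j ≤ i ∧ P i = P j := by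
  simp [attackers, mem_area, and_assoc]

lemma forall_attackers_eq_empty_iff {γ : Fin d → ℕ} {P : Fin d → Fin M} :
    (∀ j, attackers γ P j = ∅) ↔ ∀ p ∈ area d γ, P p.1 ≠ P p.2 := by
  simp only [attackers, filter_eq_empty_iff, mem_univ, true_implies, not_and, Prod.forall]
  exact forall_comm

def strictInv (γ : Fin d → ℕ) (P : Fin d → Fin M) : ℕ :=
  #{p ∈ area d γ | P p.2 < P p.1}

lemma card_filter_area (γ : Fin d → ℕ) (Q : Fin d → Fin d → Prop) [DecidableRel Q] :
    #{p ∈ area d γ | Q p.1 p.2} = ∑ j, #{i | (i, j) ∈ area d γ ∧ Q i j} := by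
  simp only [card_filter, sum_filter, area, mem_filter, mem_univ, true_and]
  rw [Fintype.sum_prod_type_right]
  simp only [ite_and]

lemma invS_mk (γ : Fin d → ℕ) (P : Fin d → Fin M) (ε : Fin d → Bool) :
    invS γ (fun i => (P i, ε i)) =
      strictInv γ P + ∑ j, if ε j then 0 else #(attackers γ P j) := by
  have hsplit : {p ∈ area d γ | RowInc (P p.2, ε p.2) (P p.1, ε p.1)} =
      {p ∈ area d γ | P p.2 < P p.1} ∪ {p ∈ area d γ | P p.2 = P p.1 ∧ ε p.2 = false} := by
    simp only [rowInc_mk_iff, filter_or]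
  rw [invS, hsplit, card_union_of_disjoint (disjoint_filter.mpr fun p _ h h' => h.ne h'.1),
    strictInv, card_filter_area γ fun i j => P j = P i ∧ ε j = false]
  congr 1
  refine sum_congr rfl fun j _ => ?_
  cases ε j <;> simp [attackers, eq_comm]

def barWeight (γ : Fin d → ℕ) (P : Fin d → Fin M) (j : Fin d) (b : Bool) : RM M :=
  if b then -tq else tq ^ #(attackers γ P j)

lemma weight_mk (γ : Fin d → ℕ) (P : Fin d → Fin M) (ε : Fin d → Bool) :
    tq ^ invS γ (fun i => (P i, ε i)) * (-tq) ^ mneg (fun i => (P i, ε i)) =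
      tq ^ strictInv γ P * ∏ j, barWeight γ P j (ε j) := by
  have hneg : (-tq : RM M) ^ mneg (fun i => (P i, ε i)) = ∏ j, if ε j then -tq else 1 := by
    rw [mneg, ← prod_const, prod_filter]
  rw [invS_mk, pow_add, hneg, mul_assoc, ← prod_pow_eq_pow_sum, ← prod_mul_distrib]
  congr 1
  refine prod_congr rfl fun j _ => ?_
  cases ε j <;> simp [barWeight]

def barSum (r : ℕ) (γ : Fin d → ℕ) (P : Fin d → Fin M) (j : Fin d) : RM M :=
  ∑ b ∈ {b | (j : ℕ) < r → (P j : ℕ) < j ∨ ((P j : ℕ) = j ∧ b = false)}, barWeight γ P j b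

lemma sum_weight_flagged_mk (r : ℕ) (γ : Fin d → ℕ) (P : Fin d → Fin M) :
    ∑ ε : Fin d → Bool with IsFlaggedSuperWord M d r (fun i => (P i, ε i)),
        tq ^ invS γ (fun i => (P i, ε i)) * (-tq) ^ mneg (fun i => (P i, ε i)) =
      tq ^ strictInv γ P * ∏ j, barSum r γ P j := by
  simp only [weight_mk, ← mul_sum, barSum, prod_univ_sum]
  congr 1
  refine sum_congr ?_ fun _ _ => rfl
  ext ε
  simp [Fintype.mem_piFinset, IsFlaggedSuperWord]

lemma Gpm_eq_sum_barSum (r : ℕ) (γ : Fin d → ℕ) :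
    Gpm M d r γ = ∑ P, tq ^ strictInv γ P * (∏ j, barSum r γ P j) * ∏ i, X (P i) := by
  rw [Gpm, sum_filter, ← (Equiv.arrowProdEquivProdArrow _ _ _).symm.sum_comp,
    Fintype.sum_prod_type]
  refine sum_congr rfl fun P _ => ?_
  rw [← sum_weight_flagged_mk, sum_mul, sum_filter]
  rfl

lemma barSum_eq_zero_of_val_lt {r : ℕ} (γ : Fin d → ℕ) {P : Fin d → Fin M} {j : Fin d}
    (hjr : (j : ℕ) < r) (hj : (j : ℕ) < P j) : barSum r γ P j = 0 := by
  rw [barSum, sum_eq_zero]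
  intro b hb
  have := (mem_filter.mp hb).2 hjr
  omega

lemma barSum_eq_zero_of_card_attackers_eq_one {r : ℕ} {γ : Fin d → ℕ} {P : Fin d → Fin M}
    {j : Fin d} (hcard : #(attackers γ P j) = 1) (hbar : (j : ℕ) < r → (P j : ℕ) < j) :
    barSum r γ P j = 0 := by
  have hall : ∀ b : Bool, (j : ℕ) < r → (P j : ℕ) < j ∨ ((P j : ℕ) = j ∧ b = false) :=
    fun _ hjr => Or.inl (hbar hjr)
  simp [barSum, filter_true_of_mem fun b _ => hall b, barWeight, hcard]

lemma barSum_of_attackers_eq_empty {r : ℕ} {γ : Fin d → ℕ} {P : Fin d → Fin M} {j : Fin d}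
    (hatt : attackers γ P j = ∅) (hfix : (j : ℕ) < r → (P j : ℕ) = j) :
    barSum r γ P j = if (j : ℕ) < r then 1 else 1 - tq := by
  split_ifs with hjr
  · simp [barSum, sum_filter, barWeight, hatt, hfix hjr, hjr]
  · simp [barSum, hjr, barWeight, hatt, sub_eq_neg_add]

lemma card_attackers_le_one {γ : Fin d → ℕ} (hmono : Monotone γ) {P : Fin d → Fin M}
    {j : Fin d} (hmin : ∀ k < j, attackers γ P k = ∅) : #(attackers γ P j) ≤ 1 := by
  suffices h : ∀ i ∈ attackers γ P j, ∀ i' ∈ attackers γ P j, ¬ i < i' from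
    card_le_one.mpr fun i hi i' hi' =>
      le_antisymm (not_lt.mp (h i' hi' i hi)) (not_lt.mp (h i hi i' hi'))
  intro i hi i' hi' hlt
  rw [mem_attackers] at hi hi'
  have hi'j : i' < j := Fin.lt_def.mpr hi'.1
  have : i ∈ attackers γ P i' :=
    mem_attackers.mpr ⟨hlt, (hmono hi'j.le).trans hi.2.1, hi.2.2.trans hi'.2.2.symm⟩
  simp [hmin i' hi'j] at this

lemma val_le_of_prod_barSum_ne_zero {r : ℕ} {γ : Fin d → ℕ} {P : Fin d → Fin M}
    (hprod : ∏ j, barSum r γ P j ≠ 0) (j : Fin d) (hjr : (j : ℕ) < r) : (P j : ℕ) ≤ j :=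
  not_lt.mp fun hj => hprod (prod_eq_zero (mem_univ j) (barSum_eq_zero_of_val_lt γ hjr hj))

lemma attackers_eq_empty_of_prod_barSum_ne_zero {r : ℕ} {γ : Fin d → ℕ} (hmono : Monotone γ)
    {P : Fin d → Fin M} (hprod : ∏ j, barSum r γ P j ≠ 0) (j : Fin d) :
    attackers γ P j = ∅ := by
  induction j using WellFoundedLT.induction with
  | ind j ih =>
  rcases Nat.le_one_iff_eq_zero_or_eq_one.mp (card_attackers_le_one hmono ih) with h0 | h1
  · exact card_eq_zero.mp h0
  obtain ⟨i, hi⟩ := card_eq_one.mp h1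
  have hij := mem_attackers.mp (hi ▸ mem_singleton_self i)
  have hbar : (j : ℕ) < r → (P j : ℕ) < j := by
    intro hjr
    -- `P j = j` would put the letter `j` at the attacker `i < j < r`, against the flag at `i`.
    have hPi := val_le_of_prod_barSum_ne_zero hprod i (hij.1.trans hjr)
    refine (val_le_of_prod_barSum_ne_zero hprod j hjr).lt_of_ne fun hPj => ?_
    rw [hij.2.2] at hPi
    omega
  exact (hprod (prod_eq_zero (mem_univ j) (barSum_eq_zero_of_card_attackers_eq_one h1 hbar))).elim

lemma prod_barSum_of_nonattacking {r : ℕ} {γ : Fin d → ℕ}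
    (hflag : ∀ j : Fin d, (j : ℕ) < r → γ j = 0) {P : Fin d → Fin M}
    (hP : ∀ i : Fin d, (i : ℕ) < r → (P i : ℕ) ≤ i) (hna : ∀ p ∈ area d γ, P p.1 ≠ P p.2) :
    ∏ j, barSum r γ P j = (1 - tq) ^ (d - r) := by
  have hfix : ∀ j : Fin d, (j : ℕ) < r → (P j : ℕ) = j :=
    Fin.apply_eq_val_of_le_val hP fun i j hij hjr h =>
      hna (i, j) (mem_area.mpr ⟨hij, (hflag j hjr).trans_le (Nat.zero_le _)⟩) (Fin.ext h)
  have hatt := forall_attackers_eq_empty_iff.mpr hna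
  rw [prod_congr rfl fun j _ => barSum_of_attackers_eq_empty (hatt j) (hfix j),
    prod_ite, prod_const_one, one_mul, prod_const, filter_not,
    card_sdiff_of_subset (filter_subset _ _), Fin.card_filter_val_lt, card_univ, Fintype.card_fin]
  congr 1
  omega

lemma strictInv_eq_invP {γ : Fin d → ℕ} {P : Fin d → Fin M}
    (hna : ∀ p ∈ area d γ, P p.1 ≠ P p.2) : strictInv γ P = invP γ P :=
  congrArg card <| filter_congr fun p hp => ⟨le_of_lt, fun h => h.lt_of_ne (hna p hp).symm⟩

end SignedLLT

theorem signed_LLT_nonattacking_general (M d r : ℕ) (γ : Fin d → ℕ)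
    (hmono : Monotone γ)
    (hflag : ∀ j : Fin d, (j : ℕ) < r → γ j = 0) :
    Gpm M d r γ =
      (1 - tq) ^ (d - r) *
        ∑ T ∈ Finset.univ.filter (fun T : Fin d → Fin M =>
            (∀ i : Fin d, (i : ℕ) < r → (T i : ℕ) ≤ (i : ℕ)) ∧
            ∀ p ∈ area d γ, T p.1 ≠ T p.2),
          tq ^ invP γ T * ∏ i, X (T i) := by
  rw [SignedLLT.Gpm_eq_sum_barSum, sum_filter, mul_sum]
  refine sum_congr rfl fun P _ => ?_
  split_ifs with hgood
  · rw [SignedLLT.prod_barSum_of_nonattacking hflag hgood.1 hgood.2,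
      SignedLLT.strictInv_eq_invP hgood.2]
    ring
  · suffices hzero : ∏ j, SignedLLT.barSum r γ P j = 0 by simp [hzero]
    by_contra hprod
    exact hgood ⟨SignedLLT.val_le_of_prod_barSum_ne_zero hprod,
      SignedLLT.forall_attackers_eq_empty_iff.mp
        (SignedLLT.attackers_eq_empty_of_prod_barSum_ne_zero hmono hprod)⟩

/-- non-attacking reduction for signed flagged row LLT
polynomials with empty marking:
`G^±_r(π, ∅) = (1-t)^{d-r} · ∑_T t^{inv(T)} x^T`, the sum over non-attacking
flagged `(π, ∅)`-row semistandard words with positive entries (`T i ≤ i`,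
1-based, for `i ≤ r`, and `T i ≠ T j` for all `(i, j) ∈ Area(π)`). -/
theorem signed_LLT_nonattacking (M d r : ℕ) (hrd : r ≤ d) (γ : Fin d → ℕ)
    (hmono : Monotone γ) (hdiag : ∀ j : Fin d, γ j ≤ (j : ℕ))
    (hflag : ∀ j : Fin d, (j : ℕ) < r → γ j = 0) :
    Gpm M d r γ =
      (1 - tq) ^ (d - r) *
        ∑ T ∈ Finset.univ.filter (fun T : Fin d → Fin M =>
            (∀ i : Fin d, (i : ℕ) < r → (T i : ℕ) ≤ (i : ℕ)) ∧
            ∀ p ∈ area d γ, T p.1 ≠ T p.2),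
          tq ^ invP γ T * ∏ i, X (T i) :=
  signed_LLT_nonattacking_general M d r γ hmono hflag
end
end
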